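/- Consider a k-step additive LMM u_n = ∑_{j=0}^{k-1} α_j u_{n−k+j} + Δt ∑_{j=0}^{k} (β_j F(u_{n−k+j}) + β̂_j F̂(u_{n−k+j})) with ∑_{j=0}^{k-1} α_j = 1. Suppose F satisfies ‖u + Δt F(u)‖ ≤ ‖u‖ for 0 ≤ Δt ≤ Δt_FE, F̂ satisfies ‖u + Δt F̂(u)‖ ≤ ‖u‖ for 0 ≤ Δt ≤ Δ̂t_FE, and the SSP conditions hold: β_j, β̂_j ≥ 0 and α_j − C β_j − Ĉ β̂_j ≥ 0 for j = 0,...,k−1, with C, Ĉ ≥ 0. Then under the step-size restriction Δt ≤ min{C Δt_FE, Ĉ Δ̂t_FE}, the numerical solution satisfies ‖u_n‖ ≤ max{‖u_{n−1}‖, ..., ‖u_{n−k}‖}. -/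

import Mathlib

/-!
With `s = C β_k + Ĉ β̂_k`, both the explicit terms `α_j u_j + Δt (β_j F u_j + β̂_j F̂ u_j)` and the
implicit term moved to the left, `s u_n + Δt (β_k F u_n + β̂_k F̂ u_n)`, split into a nonnegative
multiple of the vector itself plus scaled forward Euler steps of `F` and `F̂` with step sizes
`Δt / C ≤ Δt_FE` and `Δt / Ĉ ≤ Δ̂t_FE`. Hence `(1 + s) ‖u_n‖ ≤ ∑ α_j ‖u_j‖ + s ‖u_n‖`, and the
convex combination `∑ α_j ‖u_j‖` is at most the maximum.
-/

section Sublinear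

variable {E : Type*} [AddCommGroup E] [Module ℝ E] {N : E → ℝ}

theorem map_zero_of_posHomogeneous (hhom : ∀ (c : ℝ) (u : E), 0 ≤ c → N (c • u) = c * N u) :
    N 0 = 0 := by
  simpa using hhom 0 0 le_rfl

theorem smul_add_smul_le_of_forwardEuler
    (hhom : ∀ (c : ℝ) (u : E), 0 ≤ c → N (c • u) = c * N u) {F : E → E} {ΔtFE : ℝ}
    (hF : ∀ (u : E) (τ : ℝ), 0 ≤ τ → τ ≤ ΔtFE → N (u + τ • F u) ≤ N u)
    (u : E) {c τ : ℝ} (hc : 0 ≤ c) (hτ : 0 ≤ τ) (hτc : τ ≤ c * ΔtFE) :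
    N (c • u + τ • F u) ≤ c * N u := by
  rcases hc.eq_or_lt with rfl | hc
  · obtain rfl : τ = 0 := by linarith
    simp [map_zero_of_posHomogeneous hhom]
  · have hfactor : c • u + τ • F u = c • (u + (τ / c) • F u) := by
      rw [smul_add, smul_smul, mul_div_cancel₀ _ hc.ne']
    rw [hfactor, hhom c _ hc.le]
    exact mul_le_mul_of_nonneg_left
      (hF u _ (div_nonneg hτ hc.le) ((div_le_iff₀' hc).2 hτc)) hc.le

theorem additive_stage_le (hsub : ∀ u v : E, N (u + v) ≤ N u + N v)
    (hhom : ∀ (c : ℝ) (u : E), 0 ≤ c → N (c • u) = c * N u) {F Fh : E → E} {ΔtFE ΔthFE : ℝ}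
    (hF : ∀ (u : E) (τ : ℝ), 0 ≤ τ → τ ≤ ΔtFE → N (u + τ • F u) ≤ N u)
    (hFh : ∀ (u : E) (τ : ℝ), 0 ≤ τ → τ ≤ ΔthFE → N (u + τ • Fh u) ≤ N u)
    {C Ch Δt : ℝ} (hC : 0 ≤ C) (hCh : 0 ≤ Ch) (hΔt0 : 0 ≤ Δt)
    (hΔtC : Δt ≤ C * ΔtFE) (hΔtCh : Δt ≤ Ch * ΔthFE)
    {a b bh : ℝ} (ha : 0 ≤ a) (hb : 0 ≤ b) (hbh : 0 ≤ bh) (u : E) :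
    N ((a + C * b + Ch * bh) • u + Δt • (b • F u + bh • Fh u)) ≤ (a + C * b + Ch * bh) * N u := by
  have hsplit : (a + C * b + Ch * bh) • u + Δt • (b • F u + bh • Fh u) =
      a • u + (((C * b) • u + (Δt * b) • F u) + ((Ch * bh) • u + (Δt * bh) • Fh u)) := by
    module
  have hτ : Δt * b ≤ C * b * ΔtFE := by
    rw [mul_right_comm]; exact mul_le_mul_of_nonneg_right hΔtC hb
  have hτh : Δt * bh ≤ Ch * bh * ΔthFE := by
    rw [mul_right_comm]; exact mul_le_mul_of_nonneg_right hΔtCh hbh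
  calc N ((a + C * b + Ch * bh) • u + Δt • (b • F u + bh • Fh u))
      ≤ N (a • u) + (N ((C * b) • u + (Δt * b) • F u) + N ((Ch * bh) • u + (Δt * bh) • Fh u)) := by
        rw [hsplit]; exact (hsub _ _).trans (add_le_add_right (hsub _ _) _)
    _ ≤ a * N u + (C * b * N u + Ch * bh * N u) :=
        add_le_add (hhom a u ha).le <| add_le_add
          (smul_add_smul_le_of_forwardEuler hhom hF u (mul_nonneg hC hb) (mul_nonneg hΔt0 hb) hτ)
          (smul_add_smul_le_of_forwardEuler hhom hFh u (mul_nonneg hCh hbh)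
            (mul_nonneg hΔt0 hbh) hτh)
    _ = (a + C * b + Ch * bh) * N u := by ring

theorem le_of_one_add_smul_eq_add (hsub : ∀ u v : E, N (u + v) ≤ N u + N v)
    (hhom : ∀ (c : ℝ) (u : E), 0 ≤ c → N (c • u) = c * N u) {v w z : E} {s M : ℝ} (hs : 0 ≤ s)
    (hsplit : (1 + s) • v = w + z) (hw : N w ≤ M) (hz : N z ≤ s * N v) : N v ≤ M := by
  have h := hhom (1 + s) v (by linarith)
  rw [hsplit] at h
  linarith [hsub w z]

end Sublinear

theorem Finset.sum_mul_le_sup'_of_sum_eq_one {ι : Type*} {s : Finset ι} (hs : s.Nonempty)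
    {w x : ι → ℝ} (hw₀ : ∀ i ∈ s, 0 ≤ w i) (hw₁ : ∑ i ∈ s, w i = 1) :
    ∑ i ∈ s, w i * x i ≤ s.sup' hs x := by
  simpa [Finset.centerMass_eq_of_sum_1 _ _ hw₁] using
    Finset.centerMass_le_sup (f := x) hw₀ (hw₁ ▸ one_pos)

theorem stmt_16_general (m k : ℕ) (hk : 0 < k) (N : (Fin m → ℝ) → ℝ)
    (hsub : ∀ u v : Fin m → ℝ, N (u + v) ≤ N u + N v)
    (hhom : ∀ (c : ℝ) (u : Fin m → ℝ), 0 ≤ c → N (c • u) = c * N u)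
    (F Fh : (Fin m → ℝ) → (Fin m → ℝ))
    (ΔtFE ΔthFE : ℝ)
    (hF : ∀ (u : Fin m → ℝ) (τ : ℝ), 0 ≤ τ → τ ≤ ΔtFE → N (u + τ • F u) ≤ N u)
    (hFh : ∀ (u : Fin m → ℝ) (τ : ℝ), 0 ≤ τ → τ ≤ ΔthFE → N (u + τ • Fh u) ≤ N u)
    (α : Fin k → ℝ) (β βh : Fin (k + 1) → ℝ)
    (hconsist : ∑ j, α j = 1)
    (C Ch : ℝ) (hC : 0 ≤ C) (hCh : 0 ≤ Ch)
    (hβ : ∀ j, 0 ≤ β j) (hβh : ∀ j, 0 ≤ βh j)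
    (hssp : ∀ j : Fin k, 0 ≤ α j - C * β j.castSucc - Ch * βh j.castSucc)
    (Δt : ℝ) (hΔt0 : 0 ≤ Δt) (hΔt : Δt ≤ min (C * ΔtFE) (Ch * ΔthFE))
    (uprev : Fin k → (Fin m → ℝ)) (un : Fin m → ℝ)
    (hstep : un = ∑ j : Fin k, α j • uprev j +
      Δt • ((∑ j : Fin k, (β j.castSucc • F (uprev j) + βh j.castSucc • Fh (uprev j))) +
        (β (Fin.last k) • F un + βh (Fin.last k) • Fh un))) :
    N un ≤ Finset.univ.sup' (Finset.univ_nonempty_iff.mpr ⟨⟨0, hk⟩⟩)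
      (fun j : Fin k => N (uprev j)) := by
  set M := Finset.univ.sup' (Finset.univ_nonempty_iff.mpr ⟨⟨0, hk⟩⟩) fun j : Fin k => N (uprev j)
  set s := C * β (Fin.last k) + Ch * βh (Fin.last k)
  have hΔtC : Δt ≤ C * ΔtFE := hΔt.trans (min_le_left _ _)
  have hΔtCh : Δt ≤ Ch * ΔthFE := hΔt.trans (min_le_right _ _)
  have hexplicit_le (j : Fin k) :
      N (α j • uprev j + Δt • (β j.castSucc • F (uprev j) + βh j.castSucc • Fh (uprev j))) ≤
        α j * N (uprev j) := by
    have h := additive_stage_le hsub hhom hF hFh hC hCh hΔt0 hΔtC hΔtCh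
      (hssp j) (hβ j.castSucc) (hβh j.castSucc) (uprev j)
    rwa [show α j - C * β j.castSucc - Ch * βh j.castSucc + C * β j.castSucc +
      Ch * βh j.castSucc = α j by ring] at h
  have himplicit_le : N (s • un + Δt • (β (Fin.last k) • F un + βh (Fin.last k) • Fh un)) ≤ s * N un := by
    simpa only [zero_add] using additive_stage_le hsub hhom hF hFh hC hCh hΔt0 hΔtC hΔtCh
      le_rfl (hβ (Fin.last k)) (hβh (Fin.last k)) un
  have hα₀ (j : Fin k) : 0 ≤ α j := by
    linarith [hssp j, mul_nonneg hC (hβ j.castSucc), mul_nonneg hCh (hβh j.castSucc)]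
  have hexplicit_sum_le : N (∑ j, (α j • uprev j +
      Δt • (β j.castSucc • F (uprev j) + βh j.castSucc • Fh (uprev j)))) ≤ M :=
    (Finset.le_sum_of_subadditive N (map_zero_of_posHomogeneous hhom).le hsub _ _).trans
      ((Finset.sum_le_sum fun j _ => hexplicit_le j).trans
        (Finset.sum_mul_le_sup'_of_sum_eq_one _ (fun j _ => hα₀ j) hconsist))
  refine le_of_one_add_smul_eq_add hsub hhom
    (add_nonneg (mul_nonneg hC (hβ _)) (mul_nonneg hCh (hβh _))) ?_ hexplicit_sum_le himplicit_le
  rw [add_smul, one_smul, Finset.sum_add_distrib, ← Finset.smul_sum]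
  nth_rw 1 [hstep]
  module

/-- Monotonicity of SSP additive linear multistep methods with different forward Euler
conditions for the two operators. -/
theorem stmt_16 (m k : ℕ) (hk : 0 < k) (N : (Fin m → ℝ) → ℝ)
    (hsub : ∀ u v : Fin m → ℝ, N (u + v) ≤ N u + N v)
    (hhom : ∀ (c : ℝ) (u : Fin m → ℝ), 0 ≤ c → N (c • u) = c * N u)
    (F Fh : (Fin m → ℝ) → (Fin m → ℝ))
    (ΔtFE ΔthFE : ℝ) (hΔtFE : 0 < ΔtFE) (hΔthFE : 0 < ΔthFE)
    (hF : ∀ (u : Fin m → ℝ) (τ : ℝ), 0 ≤ τ → τ ≤ ΔtFE → N (u + τ • F u) ≤ N u)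
    (hFh : ∀ (u : Fin m → ℝ) (τ : ℝ), 0 ≤ τ → τ ≤ ΔthFE → N (u + τ • Fh u) ≤ N u)
    (α : Fin k → ℝ) (β βh : Fin (k + 1) → ℝ)
    (hconsist : ∑ j, α j = 1)
    (C Ch : ℝ) (hC : 0 ≤ C) (hCh : 0 ≤ Ch)
    (hβ : ∀ j, 0 ≤ β j) (hβh : ∀ j, 0 ≤ βh j)
    (hssp : ∀ j : Fin k, 0 ≤ α j - C * β j.castSucc - Ch * βh j.castSucc)
    (Δt : ℝ) (hΔt0 : 0 ≤ Δt) (hΔt : Δt ≤ min (C * ΔtFE) (Ch * ΔthFE))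
    (uprev : Fin k → (Fin m → ℝ)) (un : Fin m → ℝ)
    (hstep : un = ∑ j : Fin k, α j • uprev j +
      Δt • ((∑ j : Fin k, (β j.castSucc • F (uprev j) + βh j.castSucc • Fh (uprev j))) +
        (β (Fin.last k) • F un + βh (Fin.last k) • Fh un))) :
    N un ≤ Finset.univ.sup' (Finset.univ_nonempty_iff.mpr ⟨⟨0, hk⟩⟩)
      (fun j : Fin k => N (uprev j)) :=
  stmt_16_general m k hk N hsub hhom F Fh ΔtFE ΔthFE hF hFh α β βh hconsist C Ch hC hCh hβ hβh hssp
    Δt hΔt0 hΔt uprev un hstep
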